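/- arXiv:math/0505689 — 3 statements merged into one kernel-verified Lean document; each statement's English description precedes it below -/
import Mathlib

section
/- Let M and N be finite matroids on disjoint ground sets, and let P be the matroid on E(M) ∪ E(N) whose independent sets are exactly the sets I with I ∩ E(M) independent in M and |I ∩ E(N)| − r_N(I ∩ E(N)) ≤ r_M(E(M)) − |I ∩ E(M)| (the free product M □ N). Then for all X ⊆ E(M) and Y ⊆ E(N), r_P(X ∪ Y) = r_M(X) + r_N(Y) + min{ r_M(E(M)) − r_M(X), |Y| − r_N(Y) }. -/
/-!
A set `I ⊆ X ∪ Y` independent in the free product has `|I ∩ E(M)| ≤ r_M(X)`, while the nullity of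
`I ∩ E(N)` is at most both `r_M(E(M)) - |I ∩ E(M)|` and (nullity being monotone) `ν_N(Y)`; this
gives the upper bound. It is attained by a basis of `X` together with a basis of `Y` padded by
`min (r_M(E(M)) - r_M(X)) ν_N(Y)` further elements of `Y`.
-/

namespace Matroid

variable {α β : Type*}

/-- A circuit of a matroid: a minimal dependent set. -/
def IsCircuit' (M : Matroid α) (C : Set α) : Prop :=
  M.Dep C ∧ ∀ D, D ⊂ C → M.Indep D

/-- A cyclic flat: a flat that is a (possibly empty) union of circuits. -/
def CyclicFlat (M : Matroid α) (X : Set α) : Prop :=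
  M.IsFlat X ∧ ∀ e ∈ X, ∃ C, M.IsCircuit' C ∧ C ⊆ X ∧ e ∈ C

/-- The rank of a set: the maximum size of an independent subset. -/
noncomputable def rk (M : Matroid α) (X : Set α) : ℕ :=
  sSup {n | ∃ I, M.Indep I ∧ I ⊆ X ∧ I.ncard = n}

/-- Deletion of a set from a matroid. -/
def del (M : Matroid α) (D : Set α) : Matroid α := M ↾ (M.E \ D)

/-- Contraction of a set in a matroid. -/
def con (M : Matroid α) (C : Set α) : Matroid α := (M✶ ↾ (M.E \ C))✶

/-- `N` is a minor of `M` if it is obtained from `M` by a contraction and a deletion. -/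
def IsMinorOf (N M : Matroid α) : Prop := ∃ C D, N = (M.con C).del D

/-- Matroid isomorphism: a bijection of ground sets preserving independence. -/
def IsIsoTo (M : Matroid α) (N : Matroid β) : Prop :=
  ∃ e : M.E ≃ N.E, ∀ I : Set M.E,
    M.Indep (Subtype.val '' I) ↔ N.Indep (Subtype.val '' (e '' I))

end Matroid

namespace Set

variable {α : Type*} {A B X Y : Set α}

lemma union_inter_eq_left_of_disjoint (hX : X ⊆ A) (hY : Y ⊆ B) (hAB : Disjoint A B) :
    (X ∪ Y) ∩ A = X := by
  rw [union_inter_distrib_right, inter_eq_left.2 hX, (hAB.symm.mono_left hY).inter_eq,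
    union_empty]

lemma union_inter_eq_right_of_disjoint (hX : X ⊆ A) (hY : Y ⊆ B) (hAB : Disjoint A B) :
    (X ∪ Y) ∩ B = Y := by
  rw [union_comm, union_inter_eq_left_of_disjoint hY hX hAB.symm]

end Set

namespace Matroid

open Set

variable {α : Type*} {M : Matroid α} {I J X Y Z : Set α}

lemma rk_eq_ncard_of_forall_ncard_le (hI : M.Indep I) (hIX : I ⊆ X)
    (h : ∀ J, M.Indep J → J ⊆ X → J.ncard ≤ I.ncard) : M.rk X = I.ncard := by
  have hmem : I.ncard ∈ {n | ∃ J, M.Indep J ∧ J ⊆ X ∧ J.ncard = n} := ⟨I, hI, hIX, rfl⟩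
  have hle : ∀ n ∈ {n | ∃ J, M.Indep J ∧ J ⊆ X ∧ J.ncard = n}, n ≤ I.ncard := by
    rintro n ⟨J, hJ, hJX, rfl⟩
    exact h J hJ hJX
  exact le_antisymm (csSup_le ⟨_, hmem⟩ hle) (le_csSup ⟨_, hle⟩ hmem)

section RankFinite

variable [M.RankFinite]

lemma IsBasis'.ncard_le_of_indep (hI : M.IsBasis' I X) (hJ : M.Indep J) (hJX : J ⊆ X) :
    J.ncard ≤ I.ncard := by
  obtain ⟨J', hJ', hJJ'⟩ := hJ.subset_isBasis'_of_subset hJX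
  calc J.ncard ≤ J'.ncard := ncard_le_ncard hJJ' hJ'.indep.finite
    _ = I.ncard := by rw [ncard_def, ncard_def, hJ'.encard_eq_encard hI]

lemma IsBasis'.rk_eq_ncard (hI : M.IsBasis' I X) : M.rk X = I.ncard :=
  rk_eq_ncard_of_forall_ncard_le hI.indep hI.subset fun _ ↦ hI.ncard_le_of_indep

lemma Indep.ncard_le_rk (hJ : M.Indep J) (hJX : J ⊆ X) : J.ncard ≤ M.rk X := by
  obtain ⟨I, hI⟩ := M.exists_isBasis' X
  exact hI.rk_eq_ncard ▸ hI.ncard_le_of_indep hJ hJX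

lemma rk_mono (hXY : X ⊆ Y) : M.rk X ≤ M.rk Y := by
  obtain ⟨I, hI⟩ := M.exists_isBasis' X
  exact hI.rk_eq_ncard ▸ hI.indep.ncard_le_rk (hI.subset.trans hXY)

lemma rk_le_ncard (hX : X.Finite) : M.rk X ≤ X.ncard := by
  obtain ⟨I, hI⟩ := M.exists_isBasis' X
  exact hI.rk_eq_ncard ▸ ncard_le_ncard hI.subset hX

lemma ncard_add_rk_le_ncard_add_rk (hZY : Z ⊆ Y) (hY : Y.Finite) :
    Z.ncard + M.rk Y ≤ Y.ncard + M.rk Z := by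
  obtain ⟨I, hI⟩ := M.exists_isBasis' Y
  have hsplit : (I ∩ Z).ncard + (I \ Z).ncard = I.ncard :=
    ncard_inter_add_ncard_sdiff_eq_ncard I Z hI.indep.finite
  have hIZ : (I ∩ Z).ncard ≤ M.rk Z :=
    (hI.indep.subset inter_subset_left).ncard_le_rk inter_subset_right
  have hIdiff : (I \ Z).ncard ≤ (Y \ Z).ncard :=
    ncard_le_ncard (sdiff_subset_sdiff_left hI.subset) (hY.subset sdiff_subset)
  have hYsplit : (Y \ Z).ncard + Z.ncard = Y.ncard := ncard_sdiff_add_ncard_of_subset hZY hY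
  rw [hI.rk_eq_ncard]
  omega

end RankFinite

def IsFreeProduct (M N P : Matroid α) : Prop :=
  ∀ I : Set α, P.Indep I ↔
    (I ⊆ M.E ∪ N.E ∧ M.Indep (I ∩ M.E) ∧
      ((I ∩ N.E).ncard : ℤ) - (N.rk (I ∩ N.E) : ℤ) ≤ (M.rk M.E : ℤ) - ((I ∩ M.E).ncard : ℤ))

namespace IsFreeProduct

variable {N P : Matroid α} [M.RankFinite] [N.Finite]

lemma exists_indep (hP : IsFreeProduct M N P) (hMN : Disjoint M.E N.E) (hX : X ⊆ M.E)
    (hY : Y ⊆ N.E) : ∃ I, P.Indep I ∧ I ⊆ X ∪ Y ∧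
      I.ncard = M.rk X + N.rk Y + min (M.rk M.E - M.rk X) (Y.ncard - N.rk Y) := by
  have hXE : M.rk X ≤ M.rk M.E := rk_mono hX
  have hYfin : Y.Finite := N.set_finite Y hY
  have hrkY : N.rk Y ≤ Y.ncard := rk_le_ncard hYfin
  obtain ⟨BX, hBX⟩ := M.exists_isBasis' X
  obtain ⟨BY, hBY⟩ := N.exists_isBasis' Y
  set k := min (M.rk M.E - M.rk X) (Y.ncard - N.rk Y)
  obtain ⟨Z, hBYZ, hZY, hZ⟩ := exists_subsuperset_card_eq hBY.subset
    (n := N.rk Y + k) (by rw [← hBY.rk_eq_ncard]; omega) (by omega)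
  have hZrk : N.rk Z = N.rk Y :=
    le_antisymm (rk_mono hZY) (hBY.rk_eq_ncard ▸ hBY.indep.ncard_le_rk hBYZ)
  have hM : (BX ∪ Z) ∩ M.E = BX :=
    union_inter_eq_left_of_disjoint (hBX.subset.trans hX) (hZY.trans hY) hMN
  have hN : (BX ∪ Z) ∩ N.E = Z :=
    union_inter_eq_right_of_disjoint (hBX.subset.trans hX) (hZY.trans hY) hMN
  refine ⟨BX ∪ Z, ?_, union_subset_union hBX.subset hZY, ?_⟩
  · rw [hP, hM, hN, hZrk, hZ, ← hBX.rk_eq_ncard]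
    refine ⟨union_subset_union (hBX.subset.trans hX) (hZY.trans hY), hBX.indep, ?_⟩
    have : k ≤ M.rk M.E - M.rk X := min_le_left _ _
    omega
  · rw [ncard_union_eq (hMN.mono (hBX.subset.trans hX) (hZY.trans hY)) hBX.indep.finite
      (hYfin.subset hZY), hZ, ← hBX.rk_eq_ncard, add_assoc]

lemma ncard_le (hP : IsFreeProduct M N P) (hMN : Disjoint M.E N.E) (hX : X ⊆ M.E)
    (hY : Y ⊆ N.E) (hJ : P.Indep J) (hJXY : J ⊆ X ∪ Y) :
    J.ncard ≤ M.rk X + N.rk Y + min (M.rk M.E - M.rk X) (Y.ncard - N.rk Y) := by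
  obtain ⟨hJE, hJM, hnull⟩ := (hP J).1 hJ
  have hYfin : Y.Finite := N.set_finite Y hY
  have hJMX : J ∩ M.E ⊆ X :=
    union_inter_eq_left_of_disjoint hX hY hMN ▸ inter_subset_inter_left _ hJXY
  have hJNY : J ∩ N.E ⊆ Y :=
    union_inter_eq_right_of_disjoint hX hY hMN ▸ inter_subset_inter_left _ hJXY
  have hsplit : J.ncard = (J ∩ M.E).ncard + (J ∩ N.E).ncard := by
    conv_lhs => rw [← inter_eq_left.2 hJE, inter_union_distrib_left]
    exact ncard_union_eq (hMN.mono inter_subset_right inter_subset_right)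
      hJM.finite (hYfin.subset hJNY)
  have hJMrk : (J ∩ M.E).ncard ≤ M.rk X := hJM.ncard_le_rk hJMX
  have hJNrk : N.rk (J ∩ N.E) ≤ N.rk Y := rk_mono hJNY
  have hJNnull := N.ncard_add_rk_le_ncard_add_rk hJNY hYfin
  have hXE : M.rk X ≤ M.rk M.E := rk_mono hX
  omega

theorem rk_union (hP : IsFreeProduct M N P) (hMN : Disjoint M.E N.E) (hX : X ⊆ M.E)
    (hY : Y ⊆ N.E) :
    P.rk (X ∪ Y) = M.rk X + N.rk Y + min (M.rk M.E - M.rk X) (Y.ncard - N.rk Y) := by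
  obtain ⟨I, hI, hIXY, hIcard⟩ := hP.exists_indep hMN hX hY
  rw [rk_eq_ncard_of_forall_ncard_le hI hIXY fun J hJ hJXY ↦
    hIcard ▸ hP.ncard_le hMN hX hY hJ hJXY, hIcard]

end IsFreeProduct

end Matroid

theorem free_product_rank_general {α : Type*} (M N : Matroid α) [M.Finite] [N.Finite]
    (hdisj : Disjoint M.E N.E) (P : Matroid α)
    (hPI : ∀ I : Set α, P.Indep I ↔
      (I ⊆ M.E ∪ N.E ∧ M.Indep (I ∩ M.E) ∧
        ((I ∩ N.E).ncard : ℤ) - (N.rk (I ∩ N.E) : ℤ) ≤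
          (M.rk M.E : ℤ) - ((I ∩ M.E).ncard : ℤ))) :
    ∀ X ⊆ M.E, ∀ Y ⊆ N.E,
      (P.rk (X ∪ Y) : ℤ) = (M.rk X : ℤ) + (N.rk Y : ℤ) +
        min ((M.rk M.E : ℤ) - (M.rk X : ℤ)) ((Y.ncard : ℤ) - (N.rk Y : ℤ)) := by
  intro X hX Y hY
  rw [Matroid.IsFreeProduct.rk_union hPI hdisj hX hY]
  push_cast [Nat.cast_sub (Matroid.rk_mono hX),
    Nat.cast_sub (Matroid.rk_le_ncard (N.set_finite Y hY))]
  ring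

/-- Rank function of the free product: if `P` is the matroid on `E(M) ∪ E(N)` whose
independent sets are the sets `I` with `I ∩ E(M)` independent in `M` and
`ν_N (I ∩ E(N)) ≤ r M - |I ∩ E(M)|`, then for `X ⊆ E(M)` and `Y ⊆ E(N)`,
`r_P (X ∪ Y) = r_M X + r_N Y + min (r M - r_M X) (ν_N Y)`. -/
theorem free_product_rank {α : Type*} (M N : Matroid α) [M.Finite] [N.Finite]
    (hdisj : Disjoint M.E N.E) (P : Matroid α) (hPE : P.E = M.E ∪ N.E)
    (hPI : ∀ I : Set α, P.Indep I ↔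
      (I ⊆ M.E ∪ N.E ∧ M.Indep (I ∩ M.E) ∧
        ((I ∩ N.E).ncard : ℤ) - (N.rk (I ∩ N.E) : ℤ) ≤
          (M.rk M.E : ℤ) - ((I ∩ M.E).ncard : ℤ))) :
    ∀ X ⊆ M.E, ∀ Y ⊆ N.E,
      (P.rk (X ∪ Y) : ℤ) = (M.rk X : ℤ) + (N.rk Y : ℤ) +
        min ((M.rk M.E : ℤ) - (M.rk X : ℤ)) ((Y.ncard : ℤ) - (N.rk Y : ℤ)) :=
  free_product_rank_general M N hdisj P hPI
end

section
/- Let k be a positive integer and let M be a finite matroid such that every antichain under inclusion in the set of cyclic flats of M has at most k elements. Then for every minor N of M, every antichain under inclusion in the set of cyclic flats of N has at most k elements. -/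
/-!
Cyclic flats of `M✶` are exactly the complements of cyclic flats of `M`, and for `R ⊆ M.E` the map
`Z ↦ M.closure Z` sends cyclic flats of `M ↾ R` to cyclic flats of `M`, with `Z = M.closure Z ∩ R`.
Both maps reflect comparability, so they send antichains injectively to antichains: the cyclic
width does not grow under duality or restriction, and a contraction is the dual of a restriction
of the dual.
-/

namespace Matroid

open Set

variable {α : Type*} {M : Matroid α} {X F R : Set α} {k : ℕ}

def Cyclic (M : Matroid α) (X : Set α) : Prop :=
  ∀ e ∈ X, ∃ C, M.IsCircuit C ∧ C ⊆ X ∧ e ∈ C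

def CyclicWidthLE (M : Matroid α) (k : ℕ) : Prop :=
  ∀ A : Set (Set α), (∀ X ∈ A, M.CyclicFlat X) → IsAntichain (· ⊆ ·) A → A.ncard ≤ k

lemma isCircuit'_iff {C : Set α} : M.IsCircuit' C ↔ M.IsCircuit C :=
  isCircuit_iff_forall_ssubset.symm

lemma cyclicFlat_iff : M.CyclicFlat X ↔ M.IsFlat X ∧ M.Cyclic X := by
  simp only [CyclicFlat, Cyclic, isCircuit'_iff]

lemma Cyclic.closure (hX : M.Cyclic X) : M.Cyclic (M.closure X) := by
  intro e he
  by_cases heX : e ∈ X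
  · obtain ⟨C, hC, hCX, heC⟩ := hX e heX
    exact ⟨C, hC, (M.subset_closure C hC.subset_ground).trans (M.closure_subset_closure hCX), heC⟩
  · obtain ⟨C, hCX, hC, heC⟩ := exists_isCircuit_of_mem_closure he heX
    refine ⟨C, hC, (M.subset_closure C hC.subset_ground).trans ?_, heC⟩
    rw [← M.closure_insert_eq_of_mem_closure he]
    exact M.closure_subset_closure hCX

lemma Cyclic.of_restrict (hR : R ⊆ M.E) (hX : (M ↾ R).Cyclic X) : M.Cyclic X := by
  intro e he
  obtain ⟨C, hC, hCX, heC⟩ := hX e he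
  exact ⟨C, ((restrict_isCircuit_iff hR).1 hC).1, hCX, heC⟩

/-- A circuit through `e ∈ X` and a cocircuit through `e` inside `insert e (M.E \ X)` would meet
in `{e}` alone. -/
lemma Cyclic.isFlat_dual_compl (hX : M.Cyclic X) : M✶.IsFlat (M.E \ X) := by
  refine isFlat_iff_closure_eq.2 <| (M✶.subset_closure _ sdiff_subset).antisymm' fun e he ↦ ?_
  by_contra heX
  have heE : e ∈ M.E := M✶.closure_subset_ground _ he
  obtain ⟨K, hKX, hK, heK⟩ := exists_isCircuit_of_mem_closure he heX
  obtain ⟨C, hC, hCX, heC⟩ := hX e (by_contra fun h ↦ heX ⟨heE, h⟩)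
  refine hC.inter_isCocircuit_ne_singleton hK (e := e) <|
    subset_antisymm (fun x ⟨hxC, hxK⟩ ↦ ?_) (singleton_subset_iff.2 ⟨heC, heK⟩)
  obtain rfl | hx := hKX hxK
  · rfl
  · exact absurd (hCX hxC) hx.2

lemma IsFlat.cyclic_dual_compl (hF : M.IsFlat F) : M✶.Cyclic (M.E \ F) := by
  rintro e ⟨heE, heF⟩
  obtain ⟨I, hI⟩ := M.exists_isBasis F
  have heI : e ∉ I := notMem_subset hI.subset heF
  have hins : M.Indep (insert e I) := by
    rw [hI.indep.insert_indep_iff_of_notMem heI, hI.closure_eq_closure, hF.closure]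
    exact ⟨heE, heF⟩
  obtain ⟨B, hB, hIB⟩ := hins.exists_isBase_superset
  have heB : e ∈ B := hIB (mem_insert e I)
  have hFB : F ⊆ M.closure (B \ {e}) := by
    rw [← hF.closure, ← hI.closure_eq_closure]
    exact M.closure_subset_closure
      (subset_sdiff_singleton ((subset_insert e I).trans hIB) heI)
  exact ⟨_, hB.compl_closure_sdiff_singleton_isCocircuit heB,
    sdiff_subset_sdiff_right hFB, heE, hB.indep.notMem_closure_sdiff_of_mem heB⟩

lemma CyclicFlat.dual_compl (hX : M.CyclicFlat X) : M✶.CyclicFlat (M.E \ X) := by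
  rw [cyclicFlat_iff] at hX ⊢
  exact ⟨hX.2.isFlat_dual_compl, hX.1.cyclic_dual_compl⟩

lemma CyclicFlat.of_dual_compl (hX : M✶.CyclicFlat X) : M.CyclicFlat (M.E \ X) := by
  simpa using hX.dual_compl

lemma CyclicFlat.closure_of_restrict (hR : R ⊆ M.E) (hX : (M ↾ R).CyclicFlat X) :
    M.CyclicFlat (M.closure X) := by
  rw [cyclicFlat_iff] at hX ⊢
  exact ⟨M.isFlat_closure X, (hX.2.of_restrict hR).closure⟩

lemma CyclicFlat.closure_inter_of_restrict (hR : R ⊆ M.E) (hX : (M ↾ R).CyclicFlat X) :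
    M.closure X ∩ R = X := by
  rw [← restrict_closure_eq M (R := R) hX.1.subset_ground hR, hX.1.closure]

lemma CyclicWidthLE.of_reflect_comparable {N : Matroid α} (hM : M.CyclicWidthLE k)
    (f : Set α → Set α) (hf : ∀ X, N.CyclicFlat X → M.CyclicFlat (f X))
    (hcomp : ∀ X Y, N.CyclicFlat X → N.CyclicFlat Y → f X ⊆ f Y → X ⊆ Y ∨ Y ⊆ X) :
    N.CyclicWidthLE k := by
  intro A hA hanti
  have hsub : ∀ ⦃X⦄, X ∈ A → ∀ ⦃Y⦄, Y ∈ A → f X ⊆ f Y → X = Y := fun X hX Y hY hXY ↦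
    (hcomp X Y (hA X hX) (hA Y hY) hXY).elim (hanti.eq hX hY) (fun h ↦ (hanti.eq hY hX h).symm)
  have hinj : InjOn f A := fun X hX Y hY hXY ↦ hsub hX hY hXY.subset
  calc A.ncard = (f '' A).ncard := hinj.ncard_image.symm
    _ ≤ k := hM _ (forall_mem_image.2 fun X hX ↦ hf X (hA X hX)) <| by
      rintro _ ⟨X, hX, rfl⟩ _ ⟨Y, hY, rfl⟩ hne hXY
      exact hne (congrArg f (hsub hX hY hXY))

lemma CyclicWidthLE.dual (hM : M.CyclicWidthLE k) : M✶.CyclicWidthLE k := by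
  refine hM.of_reflect_comparable (M.E \ ·) (fun X hX ↦ hX.of_dual_compl) fun X Y _ hY hXY ↦ ?_
  exact .inr fun e heY ↦ by_contra fun heX ↦ (hXY ⟨hY.1.subset_ground heY, heX⟩).2 heY

lemma CyclicWidthLE.restrict (hM : M.CyclicWidthLE k) (hR : R ⊆ M.E) :
    (M ↾ R).CyclicWidthLE k := by
  refine hM.of_reflect_comparable M.closure (fun X hX ↦ hX.closure_of_restrict hR)
    fun X Y hX hY hXY ↦ .inl ?_
  rw [← hX.closure_inter_of_restrict hR, ← hY.closure_inter_of_restrict hR]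
  exact inter_subset_inter_left R hXY

end Matroid

theorem cyclicWidth_minor_general {α : Type*} (M : Matroid α) (k : ℕ)
    (h : ∀ A : Set (Set α), (∀ X ∈ A, M.CyclicFlat X) →
      IsAntichain (· ⊆ ·) A → A.ncard ≤ k) :
    ∀ N : Matroid α, N.IsMinorOf M →
      ∀ A : Set (Set α), (∀ X ∈ A, N.CyclicFlat X) →
        IsAntichain (· ⊆ ·) A → A.ncard ≤ k := by
  rintro N ⟨C, D, rfl⟩
  have hM : M.CyclicWidthLE k := h
  exact ((hM.dual.restrict Set.sdiff_subset).dual.restrict Set.sdiff_subset :)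

/-- If every antichain of cyclic flats of a finite matroid `M` has at most `k` elements, then
the same holds for every minor of `M`. -/
theorem cyclicWidth_minor {α : Type*} (M : Matroid α) [M.Finite] (k : ℕ) (hk : 0 < k)
    (h : ∀ A : Set (Set α), (∀ X ∈ A, M.CyclicFlat X) →
      IsAntichain (· ⊆ ·) A → A.ncard ≤ k) :
    ∀ N : Matroid α, N.IsMinorOf M →
      ∀ A : Set (Set α), (∀ X ∈ A, N.CyclicFlat X) →
        IsAntichain (· ⊆ ·) A → A.ncard ≤ k :=
  cyclicWidth_minor_general M k h
end

section
/- Let k be a positive integer and let M be a finite matroid of positive rank such that every antichain under inclusion in the set of cyclic flats of M has at most k elements. Then every antichain under inclusion in the set of cyclic flats of the truncation T(M) of M has at most k elements, where T(M) is the matroid on E(M) whose bases are the independent sets of M of size r(M) − 1. -/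
open Set

namespace Matroid

variable {α : Type*} {M T : Matroid α} {n : ℕ} {e : α} {B I J C X : Set α}

lemma IsFlat.insert_indep_of_subset (hX : M.IsFlat X) (hI : M.Indep I) (hIX : I ⊆ X)
    (he : e ∈ M.E \ X) : M.Indep (insert e I) :=
  (hI.insert_indep_iff_of_notMem fun heI ↦ he.2 (hIX heI)).2
    ⟨he.1, fun hecl ↦ he.2 (hX.closure ▸ M.closure_subset_closure hIX hecl)⟩

lemma Indep.ncard_le_ncard_of_isBase [M.Finite] (hI : M.Indep I) (hB : M.IsBase B) :
    I.ncard ≤ B.ncard := by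
  obtain ⟨B', hB', hIB'⟩ := hI.exists_isBase_superset
  rw [← hB'.ncard_eq_ncard_of_isBase hB]
  exact ncard_le_ncard hIB' hB'.indep.finite

structure IsTruncationTo (T M : Matroid α) (n : ℕ) : Prop where
  ground_eq : T.E = M.E
  indep_iff : ∀ I, T.Indep I ↔ M.Indep I ∧ I.ncard ≤ n

lemma isTruncationTo_of_isBase_iff [M.Finite] (hTE : T.E = M.E)
    (hTB : ∀ B, T.IsBase B ↔ M.Indep B ∧ B.ncard = n) : T.IsTruncationTo M n := by
  refine ⟨hTE, fun I ↦ ⟨fun hI ↦ ?_, fun ⟨hI, hIn⟩ ↦ ?_⟩⟩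
  · obtain ⟨B, hB, hIB⟩ := hI.exists_isBase_superset
    obtain ⟨hBM, rfl⟩ := (hTB B).1 hB
    exact ⟨hBM.subset hIB, ncard_le_ncard hIB hBM.finite⟩
  · obtain ⟨B₀, hB₀⟩ := T.exists_isBase
    obtain ⟨hB₀M, rfl⟩ := (hTB B₀).1 hB₀
    obtain ⟨B, hB, hIB⟩ := hI.exists_isBase_superset
    obtain ⟨J, hIJ, hJB, hJ⟩ :=
      exists_subsuperset_card_eq hIB hIn (hB₀M.ncard_le_ncard_of_isBase hB)
    exact ((hTB J).2 ⟨hB.indep.subset hJB, hJ⟩).indep.subset hIJ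

namespace IsTruncationTo

lemma indep_of_indep_subset_isFlat (hT : T.IsTruncationTo M n) (hX : T.IsFlat X)
    (hXE : X ≠ M.E) (hJ : M.Indep J) (hJX : J ⊆ X) : T.Indep J := by
  refine (hT.indep_iff J).2 ⟨hJ, not_lt.1 fun hlt ↦ ?_⟩
  obtain ⟨J', hJ'J, hJ'n⟩ := exists_subset_card_eq hlt.le
  obtain ⟨f, hfE, hfX⟩ :=
    exists_of_ssubset ((hT.ground_eq ▸ hX.subset_ground).ssubset_of_ne hXE)
  have hJ' : T.Indep J' := (hT.indep_iff J').2 ⟨hJ.subset hJ'J, hJ'n.le⟩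
  have hfJ' : T.Indep (insert f J') :=
    hX.insert_indep_of_subset hJ' (hJ'J.trans hJX) ⟨hT.ground_eq ▸ hfE, hfX⟩
  have hJ'fin : J'.Finite := (finite_of_ncard_pos (n.zero_le.trans_lt hlt)).subset hJ'J
  have hcard := ((hT.indep_iff _).1 hfJ').2
  rw [ncard_insert_of_notMem (fun hfJ' ↦ hfX (hJX (hJ'J hfJ'))) hJ'fin, hJ'n] at hcard
  omega

lemma isFlat_of_isFlat (hT : T.IsTruncationTo M n) (hX : T.IsFlat X) (hXE : X ≠ M.E) :
    M.IsFlat X := by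
  have hXM : X ⊆ M.E := hT.ground_eq ▸ hX.subset_ground
  obtain ⟨I, hI⟩ := M.exists_isBasis X hXM
  refine isFlat_iff_closure_eq.2 (subset_antisymm (fun f hf ↦ ?_) (M.subset_closure X hXM))
  by_contra hfX
  have hIT : T.Indep I := hT.indep_of_indep_subset_isFlat hX hXE hI.indep hI.subset
  have hfI : T.Indep (insert f I) :=
    hX.insert_indep_of_subset hIT hI.subset ⟨hT.ground_eq ▸ M.closure_subset_ground X hf, hfX⟩
  rw [← hI.closure_eq_closure, hI.indep.mem_closure_iff_of_notMem fun hfI ↦ hfX (hI.subset hfI)]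
    at hf
  exact hf.not_indep ((hT.indep_iff _).1 hfI).1

lemma isCircuit'_of_isCircuit' (hT : T.IsTruncationTo M n) (hX : T.IsFlat X) (hXE : X ≠ M.E)
    (hC : T.IsCircuit' C) (hCX : C ⊆ X) : M.IsCircuit' C :=
  ⟨⟨fun hCM ↦ hC.1.not_indep (hT.indep_of_indep_subset_isFlat hX hXE hCM hCX),
      hT.ground_eq ▸ hCX.trans hX.subset_ground⟩,
    fun D hDC ↦ ((hT.indep_iff D).1 (hC.2 D hDC)).1⟩

lemma cyclicFlat_of_cyclicFlat (hT : T.IsTruncationTo M n) (hX : T.CyclicFlat X)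
    (hXE : X ≠ M.E) : M.CyclicFlat X := by
  refine ⟨hT.isFlat_of_isFlat hX.1 hXE, fun e he ↦ ?_⟩
  obtain ⟨C, hC, hCX, heC⟩ := hX.2 e he
  exact ⟨C, hT.isCircuit'_of_isCircuit' hX.1 hXE hC hCX, hCX, heC⟩

end IsTruncationTo

end Matroid

open Matroid

theorem cyclicWidth_truncation_general {α : Type*} (M : Matroid α) [M.Finite] (k : ℕ) (hk : 0 < k)
    (h : ∀ A : Set (Set α), (∀ X ∈ A, M.CyclicFlat X) →
      IsAntichain (· ⊆ ·) A → A.ncard ≤ k)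
    (T : Matroid α) (hTE : T.E = M.E)
    (hTB : ∀ B : Set α, T.IsBase B ↔ M.Indep B ∧ B.ncard = M.rk M.E - 1) :
    ∀ A : Set (Set α), (∀ X ∈ A, T.CyclicFlat X) →
      IsAntichain (· ⊆ ·) A → A.ncard ≤ k := by
  intro A hA hAnti
  have hT : T.IsTruncationTo M (M.rk M.E - 1) := isTruncationTo_of_isBase_iff hTE hTB
  by_cases hE : M.E ∈ A
  · have hA_eq : A = {M.E} :=
      hAnti.greatest_iff.1 ⟨hE, fun X hX ↦ hTE ▸ (hA X hX).1.subset_ground⟩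
    rw [hA_eq, ncard_singleton]
    exact hk
  · exact h A (fun X hX ↦ hT.cyclicFlat_of_cyclicFlat (hA X hX) (ne_of_mem_of_not_mem hX hE))
      hAnti

/-- If every antichain of cyclic flats of a finite matroid `M` of positive rank has at most
`k` elements, then the same holds for the truncation `T M`, the matroid on `E(M)` whose bases
are the independent sets of `M` of size `r M - 1`. -/
theorem cyclicWidth_truncation {α : Type*} (M : Matroid α) [M.Finite] (k : ℕ) (hk : 0 < k)
    (hrk : 0 < M.rk M.E)
    (h : ∀ A : Set (Set α), (∀ X ∈ A, M.CyclicFlat X) →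
      IsAntichain (· ⊆ ·) A → A.ncard ≤ k)
    (T : Matroid α) (hTE : T.E = M.E)
    (hTB : ∀ B : Set α, T.IsBase B ↔ M.Indep B ∧ B.ncard = M.rk M.E - 1) :
    ∀ A : Set (Set α), (∀ X ∈ A, T.CyclicFlat X) →
      IsAntichain (· ⊆ ·) A → A.ncard ≤ k :=
  cyclicWidth_truncation_general M k hk h T hTE hTB
end
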